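/- arXiv:math-ph/0405019 — 2 statements merged into one kernel-verified Lean document; each statement's English description precedes it below -/
import Mathlib

section
/- Let J = [[0, −1], [1, 0]] and let T be a 2×2 complex matrix with T* J T = J (i.e. T ∈ U(1,1)) and |Tr(T)| < 2. Then |det T| = 1, and there exist a real matrix M with det M = 1 and real numbers ξ, η such that M T M⁻¹ = e^{iξ}·R_η, where R_η = [[cos η, −sin η],[sin η, cos η]] is the rotation matrix by angle η. -/
/-! For every 2×2 matrix, `Aᵀ J A = det A • J`. Taking determinants in `T* J T = J` gives
`|det T| = 1`, so `S := e^{-iξ} T` with `e^{2iξ} = det T` satisfies `S* J S = J = Sᵀ J S`;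
cancelling the invertible `J S` gives `S* = Sᵀ`, i.e. `S` is real, in `SL(2,ℝ)`, with
`|Tr S| < 2`.
Such an elliptic matrix has nonzero lower-left entry `c`, and an upper triangular matrix
in `SL(2,ℝ)` conjugates it to the rotation `R_η` with `2 cos η = Tr S` and `sin η` of the
sign of `c`. -/

open Matrix Complex

noncomputable section

/-- The matrix `J = [[0,−1],[1,0]]` over ℂ. -/
def Jmat : Matrix (Fin 2) (Fin 2) ℂ := !![0, -1; 1, 0]

/-- Rotation matrix by angle `x`. -/
def Rot (x : ℝ) : Matrix (Fin 2) (Fin 2) ℝ :=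
  !![Real.cos x, -Real.sin x; Real.sin x, Real.cos x]

theorem transpose_mul_J_mul_self_eq_det_smul {R : Type*} [CommRing R]
    (A : Matrix (Fin 2) (Fin 2) R) :
    Aᵀ * !![0, -1; 1, 0] * A = A.det • !![0, -1; 1, 0] := by
  rw [A.eta_fin_two]
  ext i j
  fin_cases i <;> fin_cases j <;> simp [Matrix.mul_apply, Fin.sum_univ_two] <;> ring

theorem norm_det_eq_one_of_conjTranspose_mul_mul_self_eq {n : Type*} [Fintype n] [DecidableEq n]
    {J T : Matrix n n ℂ} (hJ : J.det ≠ 0) (hT : Tᴴ * J * T = J) : ‖T.det‖ = 1 := by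
  have h : star T.det * T.det * J.det = 1 * J.det := by
    simpa [det_mul, mul_right_comm] using congrArg det hT
  rw [mul_left_inj' hJ, Complex.star_def, mul_comm, Complex.mul_conj,
    Complex.normSq_eq_norm_sq] at h
  exact (pow_eq_one_iff_of_nonneg (norm_nonneg _) two_ne_zero).mp (by exact_mod_cast h)

theorem conjTranspose_smul_mul_mul_smul_eq {n : Type*} [Fintype n] {J T : Matrix n n ℂ}
    (hT : Tᴴ * J * T = J) {c : ℂ} (hc : ‖c‖ = 1) : (c • T)ᴴ * J * (c • T) = J := by
  have hcc : star c * c = 1 := by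
    rw [Complex.star_def, mul_comm, Complex.mul_conj, Complex.normSq_eq_norm_sq, hc]; simp
  rw [conjTranspose_smul, smul_mul, smul_mul, Matrix.mul_smul, smul_smul, hT, hcc, one_smul]

theorem conjTranspose_eq_transpose_of_det_eq_one {S : Matrix (Fin 2) (Fin 2) ℂ}
    (hS : Sᴴ * Jmat * S = Jmat) (hdet : S.det = 1) : Sᴴ = Sᵀ := by
  have hJS : IsUnit (Jmat * S).det := by
    rw [det_mul, hdet, Jmat, det_fin_two_of]; norm_num
  have h : Sᴴ * (Jmat * S) = Sᵀ * (Jmat * S) := by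
    rw [← Matrix.mul_assoc, ← Matrix.mul_assoc, hS, Jmat, transpose_mul_J_mul_self_eq_det_smul,
      hdet, one_smul]
  simpa [Matrix.mul_nonsing_inv_cancel_right _ _ hJS] using congrArg (· * (Jmat * S)⁻¹) h

theorem map_re_map_ofReal_of_conjTranspose_eq_transpose {n : Type*} {S : Matrix n n ℂ}
    (hS : Sᴴ = Sᵀ) : (S.map re).map ((↑) : ℝ → ℂ) = S := by
  ext i j
  exact conj_eq_iff_re.mp (by simpa using congrFun (congrFun hS j) i)

theorem exists_map_ofReal_eq_of_det_eq_one {S : Matrix (Fin 2) (Fin 2) ℂ}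
    (hS : Sᴴ * Jmat * S = Jmat) (hdet : S.det = 1) :
    ∃ A : Matrix (Fin 2) (Fin 2) ℝ, A.map ((↑) : ℝ → ℂ) = S ∧ A.det = 1 := by
  have hA := map_re_map_ofReal_of_conjTranspose_eq_transpose
    (conjTranspose_eq_transpose_of_det_eq_one hS hdet)
  refine ⟨_, hA, ?_⟩
  have h : (((S.map re).det : ℝ) : ℂ) = ((S.map re).map ((↑) : ℝ → ℂ)).det :=
    RingHom.map_det ofRealHom _
  rw [hA, hdet] at h
  exact_mod_cast h

theorem exists_exp_mul_I_sq_eq {z : ℂ} (hz : ‖z‖ = 1) :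
    ∃ ξ : ℝ, exp (I * ξ) ^ 2 = z := by
  refine ⟨z.arg / 2, ?_⟩
  calc exp (I * ↑(z.arg / 2)) ^ 2 = exp (z.arg * I) := by
        rw [← exp_nat_mul]; push_cast; ring_nf
    _ = z := by simpa [hz] using z.norm_mul_exp_arg_mul_I

theorem map_mul_mul_map_inv {n R S : Type*} [Fintype n] [DecidableEq n] [CommRing R] [CommRing S]
    (f : R →+* S) {M : Matrix n n R} (hM : IsUnit M.det) (A : Matrix n n R) :
    M.map f * A.map f * (M.map f)⁻¹ = (M * A * M⁻¹).map f := by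
  have hinv : (M.map f)⁻¹ = M⁻¹.map f := by
    apply inv_eq_right_inv
    rw [← Matrix.map_mul, mul_nonsing_inv M hM, Matrix.map_one _ f.map_zero f.map_one]
  rw [hinv, ← Matrix.map_mul, ← Matrix.map_mul]

theorem lower_left_ne_zero_of_abs_trace_lt_two {A : Matrix (Fin 2) (Fin 2) ℝ} (hdet : A.det = 1)
    (htr : |A.trace| < 2) : A 1 0 ≠ 0 := by
  intro hc
  rw [det_fin_two, hc] at hdet
  rw [trace_fin_two, abs_lt] at htr
  nlinarith [sq_nonneg (A 0 0 - A 1 1)]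

theorem exists_two_mul_cos_eq_and_div_sin_pos {t c : ℝ} (ht : |t| < 2) (hc : c ≠ 0) :
    ∃ η : ℝ, 2 * Real.cos η = t ∧ 0 < c / Real.sin η := by
  obtain ⟨ht₁, ht₂⟩ := abs_lt.mp ht
  set η₀ := Real.arccos (t / 2)
  have hcos : 2 * Real.cos η₀ = t := by
    rw [Real.cos_arccos (by linarith) (by linarith)]; ring
  have hsin : 0 < Real.sin η₀ := by
    rw [Real.sin_arccos]; apply Real.sqrt_pos.mpr; nlinarith
  rcases hc.lt_or_gt with hneg | hpos
  · refine ⟨-η₀, by rwa [Real.cos_neg], div_pos_of_neg_of_neg hneg ?_⟩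
    rwa [Real.sin_neg, neg_lt_zero]
  · exact ⟨η₀, hcos, div_pos hpos hsin⟩

theorem upperTriangular_mul_eq_rot_mul {A : Matrix (Fin 2) (Fin 2) ℝ} (hdet : A.det = 1)
    {η q p : ℝ} (hq : q ≠ 0) (hsin : Real.sin η ≠ 0) (hcos : 2 * Real.cos η = A.trace)
    (hc : A 1 0 = Real.sin η * q ^ 2) (hp : A 0 0 - A 1 1 = 2 * Real.sin η * p) :
    !![q, -p / q; 0, 1 / q] * A = Rot η * !![q, -p / q; 0, 1 / q] := by
  rw [det_fin_two] at hdet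
  rw [trace_fin_two] at hcos
  rw [A.eta_fin_two, Rot]
  ext i j
  fin_cases i <;> fin_cases j <;> simp [Matrix.mul_apply, Fin.sum_univ_two] <;> field_simp
  · linear_combination (q ^ 2 / 2) * hp - (q ^ 2 / 2) * hcos - p * hc
  · apply mul_left_cancel₀ hsin
    linear_combination -A 0 1 * hc - ((A 0 0 - A 1 1) / 4) * hp + Real.sin_sq_add_cos_sq η - hdet
      + (Real.sin η * p / 2 - (Real.cos η + (A 0 0 + A 1 1) / 2) / 2) * hcos
  · linear_combination hc
  · linear_combination -(1 / 2) * hp - (1 / 2) * hcos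

theorem exists_conj_eq_rot_of_abs_trace_lt_two {A : Matrix (Fin 2) (Fin 2) ℝ} (hdet : A.det = 1)
    (htr : |A.trace| < 2) :
    ∃ M : Matrix (Fin 2) (Fin 2) ℝ, M.det = 1 ∧ ∃ η : ℝ, M * A * M⁻¹ = Rot η := by
  obtain ⟨η, hcos, hpos⟩ :=
    exists_two_mul_cos_eq_and_div_sin_pos htr (lower_left_ne_zero_of_abs_trace_lt_two hdet htr)
  have hsin : Real.sin η ≠ 0 := fun h => by simp [h] at hpos
  set q := √(A 1 0 / Real.sin η)
  have hq : q ≠ 0 := (Real.sqrt_pos.mpr hpos).ne'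
  have hc : A 1 0 = Real.sin η * q ^ 2 := by
    rw [Real.sq_sqrt hpos.le]; field_simp
  set p := (A 0 0 - A 1 1) / (2 * Real.sin η)
  have hp : A 0 0 - A 1 1 = 2 * Real.sin η * p := by simp only [p]; field_simp
  have hMdet : (!![q, -p / q; 0, 1 / q]).det = 1 := by
    rw [det_fin_two_of]; field_simp; ring
  refine ⟨_, hMdet, η, ?_⟩
  rw [upperTriangular_mul_eq_rot_mul hdet hq hsin hcos hc hp,
    mul_nonsing_inv_cancel_right _ _ (by rw [hMdet]; exact isUnit_one)]

/-- Every `T ∈ U(1,1)` with `|Tr T| < 2` has `|det T| = 1` and is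
conjugate, by a real matrix `M` of determinant 1, to a phase times a rotation:
`M T M⁻¹ = e^{iξ} R_η`. -/
theorem u11_normal_form (T : Matrix (Fin 2) (Fin 2) ℂ)
    (hT : Tᴴ * Jmat * T = Jmat) (htr : ‖T.trace‖ < 2) :
    ‖T.det‖ = 1 ∧
    ∃ M : Matrix (Fin 2) (Fin 2) ℝ, M.det = 1 ∧ ∃ ξ η : ℝ,
      (M.map (fun x : ℝ => (x : ℂ))) * T * (M.map (fun x : ℝ => (x : ℂ)))⁻¹
        = Complex.exp (Complex.I * ξ) • (Rot η).map (fun x : ℝ => (x : ℂ)) := by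
  have hTdet := norm_det_eq_one_of_conjTranspose_mul_mul_self_eq
    (by rw [Jmat, det_fin_two_of]; norm_num) hT
  obtain ⟨ξ, hξ⟩ := exists_exp_mul_I_sq_eq hTdet
  set e := exp (I * ξ)
  have he : ‖e‖ = 1 := by simp [e, norm_exp]
  have he0 : e ≠ 0 := exp_ne_zero _
  set S := e⁻¹ • T
  have hTS : T = e • S := (smul_inv_smul₀ he0 T).symm
  have hS : Sᴴ * Jmat * S = Jmat :=
    conjTranspose_smul_mul_mul_smul_eq hT (by rw [norm_inv, he, inv_one])
  have hSdet : S.det = 1 := by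
    rw [det_smul, Fintype.card_fin, inv_pow, hξ, inv_mul_cancel₀ (by simpa [← hξ] using he0)]
  obtain ⟨A, hA, hAdet⟩ := exists_map_ofReal_eq_of_det_eq_one hS hSdet
  have hAtr : |A.trace| < 2 := by
    have : T.trace = e * A.trace := by
      rw [hTS, trace_smul, ← hA]; simp [trace_fin_two]
    rwa [this, norm_mul, he, one_mul, norm_real, Real.norm_eq_abs] at htr
  obtain ⟨M, hM, η, hconj⟩ := exists_conj_eq_rot_of_abs_trace_lt_two hAdet hAtr
  refine ⟨hTdet, M, hM, ξ, η, ?_⟩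
  rw [hTS, ← hA, Matrix.mul_smul, smul_mul, ← hconj]
  exact congrArg _ (map_mul_mul_map_inv ofRealHom (by rw [hM]; exact isUnit_one) A)
end
end

section
/- Let (T_n)_{n≥1} be i.i.d. random matrices with values in SL(2,ℝ), with E‖Ad_{T_1}‖ < ∞, and set 𝒯(N) = T_N···T_1. Then the averaged Landauer resistance satisfies the exact formula: E( Tr( 𝒯(N)* 𝒯(N) ) ) = 2 · ⟨ e₃ , ( E(Ad_{T_1}) )^N · e₃ ⟩ = 2 · ( A^N )_{3,3} for every N ≥ 1, where A = E(Ad_{T_1}) is the entrywise expectation of the 3×3 adjoint matrix. -/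
open MeasureTheory ProbabilityTheory Matrix

noncomputable section

/-- The Borel/product measurable structure on 2×2 real matrices (entrywise). -/
instance matrixMeasurableSpace : MeasurableSpace (Matrix (Fin 2) (Fin 2) ℝ) :=
  MeasurableSpace.comap (fun A => (fun i j => A i j : Fin 2 → Fin 2 → ℝ)) inferInstance

/-- The orthonormal basis `b₁, b₂, b₃` of `sl(2,ℝ)`. -/
def bBasis : Fin 3 → Matrix (Fin 2) (Fin 2) ℝ :=
  ![!![1, 0; 0, -1], !![0, 1; 1, 0], !![0, -1; 1, 0]]

/-- The adjoint representation of `T ∈ SL(2,ℝ)` in the basis `b₁, b₂, b₃`. -/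
def AdMat (T : Matrix (Fin 2) (Fin 2) ℝ) : Matrix (Fin 3) (Fin 3) ℝ :=
  Matrix.of fun j k => (1 / 2) * ((bBasis j)ᵀ * (T * bBasis k * T⁻¹)).trace

/-- Ordered product `T_N ⋯ T_1` of matrices, `F n` being `T_{n+1}`. -/
def prodT (F : ℕ → Matrix (Fin 2) (Fin 2) ℝ) (N : ℕ) : Matrix (Fin 2) (Fin 2) ℝ :=
  (((List.range N).map F).reverse).prod

/-!
Replacing `T⁻¹` by the adjugate turns `Ad` into a polynomial, multiplicative map on all
`2 × 2` matrices, agreeing with `Ad` on `SL(2,ℝ)`; moreover `Tr(TᵀT) = 2 (Ad T)₃₃`. Hence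
`Tr(𝒯(N)ᵀ𝒯(N)) = 2 (Ad T_N ⋯ Ad T_1)₃₃`. Since `T_N` is independent of `T_{N-1} ⋯ T_1`, each entry
of `Ad T_N · Ad (T_{N-1} ⋯ T_1)` is a sum of products of independent integrable variables, so the
expectation of the product is the product of expectations and `E Ad(𝒯(N)) = Aᴺ` by induction.
-/

/-- `AdMat` with `T⁻¹` replaced by `adjugate T`: it is multiplicative on all matrices, whereas
`AdMat` takes junk values when `det T = 0`. -/
def AdAdj (T : Matrix (Fin 2) (Fin 2) ℝ) : Matrix (Fin 3) (Fin 3) ℝ :=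
  Matrix.of fun j k => (1 / 2) * ((bBasis j)ᵀ * (T * bBasis k * T.adjugate)).trace

lemma AdAdj_eq (T : Matrix (Fin 2) (Fin 2) ℝ) :
    AdAdj T = !![T 0 0 * T 1 1 + T 0 1 * T 1 0, T 0 1 * T 1 1 - T 0 0 * T 1 0,
        T 0 0 * T 1 0 + T 0 1 * T 1 1;
      T 1 0 * T 1 1 - T 0 0 * T 0 1,
        (T 0 0 ^ 2 - T 0 1 ^ 2 - T 1 0 ^ 2 + T 1 1 ^ 2) / 2,
        (- T 0 0 ^ 2 - T 0 1 ^ 2 + T 1 0 ^ 2 + T 1 1 ^ 2) / 2;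
      T 0 0 * T 0 1 + T 1 0 * T 1 1,
        (- T 0 0 ^ 2 + T 0 1 ^ 2 - T 1 0 ^ 2 + T 1 1 ^ 2) / 2,
        (T 0 0 ^ 2 + T 0 1 ^ 2 + T 1 0 ^ 2 + T 1 1 ^ 2) / 2] := by
  ext j k
  fin_cases j <;> fin_cases k <;>
    · simp [AdAdj, bBasis, adjugate_fin_two, trace_fin_two, mul_apply, Fin.sum_univ_succ]
      ring

lemma AdAdj_one : AdAdj 1 = 1 := by
  rw [AdAdj_eq]
  ext j k
  fin_cases j <;> fin_cases k <;> norm_num [one_apply, Fin.ext_iff]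

lemma AdAdj_mul (S T : Matrix (Fin 2) (Fin 2) ℝ) : AdAdj (S * T) = AdAdj S * AdAdj T := by
  rw [AdAdj_eq, AdAdj_eq S, AdAdj_eq T]
  ext j k
  fin_cases j <;> fin_cases k <;>
    · simp [mul_apply, Fin.sum_univ_succ]
      ring

lemma AdMat_eq_AdAdj {T : Matrix (Fin 2) (Fin 2) ℝ} (h : T.det = 1) : AdMat T = AdAdj T := by
  simp [AdMat, AdAdj, inv_def, h]

lemma trace_transpose_mul_self_eq_AdAdj (T : Matrix (Fin 2) (Fin 2) ℝ) :
    (Tᵀ * T).trace = 2 * AdAdj T 2 2 := by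
  simp [AdAdj_eq, trace_fin_two, mul_apply, Fin.sum_univ_succ]
  ring

lemma prodT_zero (F : ℕ → Matrix (Fin 2) (Fin 2) ℝ) : prodT F 0 = 1 := rfl

lemma prodT_succ (F : ℕ → Matrix (Fin 2) (Fin 2) ℝ) (N : ℕ) :
    prodT F (N + 1) = F N * prodT F N := by
  simp [prodT, List.range_succ]

lemma prodT_congr {F G : ℕ → Matrix (Fin 2) (Fin 2) ℝ} {N : ℕ} (h : ∀ n < N, F n = G n) :
    prodT F N = prodT G N := by
  unfold prodT
  congr 2
  exact List.map_congr_left fun n hn => h n (List.mem_range.mp hn)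

lemma measurable_matrix_iff {α : Type*} [MeasurableSpace α] {f : α → Matrix (Fin 2) (Fin 2) ℝ} :
    Measurable f ↔ ∀ i j, Measurable fun x => f x i j := by
  simp only [measurable_comap_iff, measurable_pi_iff]
  rfl

instance : BorelSpace (Matrix (Fin 2) (Fin 2) ℝ) :=
  ⟨(MeasurableSpace.comap_id (m := (inferInstance : MeasurableSpace (Fin 2 → Fin 2 → ℝ)))).trans
    (Pi.borelSpace (X := fun _ : Fin 2 => Fin 2 → ℝ)).measurable_eq⟩

instance : MeasurableMul₂ (Matrix (Fin 2) (Fin 2) ℝ) :=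
  haveI : SecondCountableTopology (Matrix (Fin 2) (Fin 2) ℝ) :=
    inferInstanceAs (SecondCountableTopology (Fin 2 → Fin 2 → ℝ))
  ContinuousMul.measurableMul₂

lemma measurable_AdAdj_apply (i j : Fin 3) :
    Measurable fun M : Matrix (Fin 2) (Fin 2) ℝ => AdAdj M i j := by
  apply Continuous.measurable
  unfold AdAdj
  fun_prop

lemma measurable_prodT (N : ℕ) :
    Measurable fun F : ℕ → Matrix (Fin 2) (Fin 2) ℝ => prodT F N := by
  induction N with
  | zero => exact measurable_const
  | succ N ih =>
    simp only [prodT_succ]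
    exact (measurable_pi_apply N).mul ih

lemma indepFun_prodT {Ω : Type*} [MeasurableSpace Ω] {μ : Measure Ω}
    {Ts : ℕ → Ω → Matrix (Fin 2) (Fin 2) ℝ} (hindep : iIndepFun Ts μ)
    (hTs : ∀ n, Measurable (Ts n)) (N : ℕ) :
    IndepFun (Ts N) (fun ω => prodT (Ts · ω) N) μ := by
  have hN : N ∈ ({N} : Finset ℕ) := Finset.mem_singleton_self N
  let extend (v : Finset.range N → Matrix (Fin 2) (Fin 2) ℝ) (n : ℕ) : Matrix (Fin 2) (Fin 2) ℝ :=
    if h : n ∈ Finset.range N then v ⟨n, h⟩ else 1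
  have hextend : Measurable extend := measurable_pi_lambda _ fun n => by
    by_cases h : n ∈ Finset.range N
    · simp only [extend, dif_pos h]
      exact measurable_pi_apply _
    · simp only [extend, dif_neg h]
      exact measurable_const
  have hsplit := (hindep.indepFun_finset {N} (Finset.range N) (by simp) hTs).comp
    (measurable_pi_apply ⟨N, hN⟩) ((measurable_prodT N).comp hextend)
  have hprod : (fun ω => prodT (Ts · ω) N) = fun ω => prodT (extend fun i => Ts i ω) N :=
    funext fun ω => prodT_congr fun n hn => by simp [extend, hn]
  rw [hprod]
  exact hsplit

section meanMatrix

variable {Ω : Type*} [MeasurableSpace Ω] {ι κ ρ : Type*}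

/-- Matrices carry no global norm, so the expectation of a random matrix is taken entrywise. -/
def meanMatrix (μ : Measure Ω) (X : Ω → Matrix ι κ ℝ) : Matrix ι κ ℝ :=
  Matrix.of fun i j => ∫ ω, X ω i j ∂μ

variable {μ : Measure Ω} [Fintype κ] {X : Ω → Matrix ι κ ℝ} {Y : Ω → Matrix κ ρ ℝ}

lemma integrable_mul_apply_of_indepFun
    (hXY : ∀ i j k, IndepFun (fun ω => X ω i j) (fun ω => Y ω j k) μ)
    (hX : ∀ i j, Integrable (fun ω => X ω i j) μ) (hY : ∀ j k, Integrable (fun ω => Y ω j k) μ)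
    (i : ι) (k : ρ) : Integrable (fun ω => (X ω * Y ω) i k) μ := by
  simp only [mul_apply]
  exact integrable_finsetSum _ fun j _ => (hXY i j k).integrable_mul (hX i j) (hY j k)

lemma meanMatrix_mul_of_indepFun
    (hXY : ∀ i j k, IndepFun (fun ω => X ω i j) (fun ω => Y ω j k) μ)
    (hX : ∀ i j, Integrable (fun ω => X ω i j) μ) (hY : ∀ j k, Integrable (fun ω => Y ω j k) μ) :
    meanMatrix μ (fun ω => X ω * Y ω) = meanMatrix μ X * meanMatrix μ Y := by
  ext i k
  have hterm j : Integrable (fun ω => X ω i j * Y ω j k) μ :=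
    (hXY i j k).integrable_mul (hX i j) (hY j k)
  simp only [meanMatrix, of_apply, mul_apply]
  rw [integral_finsetSum _ fun j _ => hterm j]
  exact Finset.sum_congr rfl fun j _ => (hXY i j k).integral_fun_mul_eq_mul_integral
    (hX i j).aestronglyMeasurable (hY j k).aestronglyMeasurable

end meanMatrix

lemma integrable_AdAdj_prodT_and_meanMatrix_eq_pow {Ω : Type*} [MeasurableSpace Ω]
    {μ : Measure Ω} [IsProbabilityMeasure μ] {Ts : ℕ → Ω → Matrix (Fin 2) (Fin 2) ℝ}
    (hindep : iIndepFun Ts μ) (hTs : ∀ n, Measurable (Ts n))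
    (hint : ∀ n i j, Integrable (fun ω => AdAdj (Ts n ω) i j) μ)
    {A : Matrix (Fin 3) (Fin 3) ℝ} (hmean : ∀ n, meanMatrix μ (fun ω => AdAdj (Ts n ω)) = A)
    (N : ℕ) :
    (∀ i j, Integrable (fun ω => AdAdj (prodT (Ts · ω) N) i j) μ) ∧
      meanMatrix μ (fun ω => AdAdj (prodT (Ts · ω) N)) = A ^ N := by
  induction N with
  | zero =>
    simp only [prodT_zero, AdAdj_one]
    refine ⟨fun i j => integrable_const _, ?_⟩
    ext i j
    simp [meanMatrix]
  | succ N ih =>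
    have hfactor : ∀ i j k, IndepFun (fun ω => AdAdj (Ts N ω) i j)
        (fun ω => AdAdj (prodT (Ts · ω) N) j k) μ := fun i j k =>
      (indepFun_prodT hindep hTs N).comp (measurable_AdAdj_apply i j) (measurable_AdAdj_apply j k)
    simp only [prodT_succ, AdAdj_mul]
    exact ⟨integrable_mul_apply_of_indepFun hfactor (hint N) ih.1,
      by rw [meanMatrix_mul_of_indepFun hfactor (hint N) ih.1, hmean, ih.2, pow_succ']⟩

/-- For i.i.d. random matrices in `SL(2,ℝ)` with integrable adjoint
matrix, the averaged Landauer resistance is exactly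
`E(Tr(𝒯(N)*𝒯(N))) = 2·(Aᴺ)₃₃` where `A = E(Ad_{T₁})` entrywise. -/
theorem averaged_landauer_formula
    {Ω : Type*} [MeasurableSpace Ω] (μ : Measure Ω) [IsProbabilityMeasure μ]
    (Ts : ℕ → Ω → Matrix (Fin 2) (Fin 2) ℝ)
    (hmeas : ∀ n i j, Measurable fun ω => Ts n ω i j)
    (hdet : ∀ n ω, (Ts n ω).det = 1)
    (hindep : iIndepFun Ts μ)
    (hlaw : ∀ n, Measure.map (Ts n) μ = Measure.map (Ts 0) μ)
    (hint : ∀ i j, Integrable (fun ω => AdMat (Ts 0 ω) i j) μ) :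
    ∀ N : ℕ, 1 ≤ N →
      ∫ ω, ((prodT (fun n => Ts n ω) N)ᵀ * prodT (fun n => Ts n ω) N).trace ∂μ
        = 2 * ((Matrix.of fun i j => ∫ ω, AdMat (Ts 0 ω) i j ∂μ) ^ N) 2 2 := by
  intro N _
  have hTs n : Measurable (Ts n) := measurable_matrix_iff.mpr (hmeas n)
  have hAd n i j :
      IdentDistrib (fun ω => AdAdj (Ts n ω) i j) (fun ω => AdMat (Ts 0 ω) i j) μ μ := by
    simp only [AdMat_eq_AdAdj (hdet 0 _)]
    exact (IdentDistrib.mk (hTs n).aemeasurable (hTs 0).aemeasurable (hlaw n)).comp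
      (measurable_AdAdj_apply i j)
  obtain ⟨-, hmean⟩ := integrable_AdAdj_prodT_and_meanMatrix_eq_pow
    (A := meanMatrix μ fun ω => AdMat (Ts 0 ω)) hindep hTs
    (fun n i j => (hAd n i j).integrable_iff.mpr (hint i j))
    (fun n => Matrix.ext fun i j => (hAd n i j).integral_eq) N
  calc ∫ ω, ((prodT (Ts · ω) N)ᵀ * prodT (Ts · ω) N).trace ∂μ
      = 2 * ∫ ω, AdAdj (prodT (Ts · ω) N) 2 2 ∂μ := by
        simp only [trace_transpose_mul_self_eq_AdAdj, integral_const_mul]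
    _ = 2 * ((meanMatrix μ fun ω => AdMat (Ts 0 ω)) ^ N) 2 2 := by rw [← hmean]; rfl
end
end
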